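/- For the inductively defined set of terms over names with function symbols, simultaneous substitution satisfies the alpha-renaming law: if the names in the list b⃗ occur neither in X nor in a⃗, then X[a⃗ := T⃗] equals ((b⃗ a⃗) · X)[b⃗ := T⃗], where (b⃗ a⃗) denotes the permutation swapping each bᵢ with the corresponding aᵢ. -/

import Mathlib

/-- Terms over a signature `F` of function symbols: a term is either a name
(drawn from the countably infinite set ℕ) or a function symbol applied to a
list of terms. -/
inductive Term (F : Type) : Type
  | name : ℕ → Term F
  | app  : F → List (Term F) → Term F

namespace Term

-- The (finite) set of names occurring syntactically in a term / a list of terms.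
mutual
  def namesT {F : Type} : Term F → Finset ℕ
    | .name a => {a}
    | .app _ ts => namesL ts
  def namesL {F : Type} : List (Term F) → Finset ℕ
    | [] => ∅
    | t :: ts => namesT t ∪ namesL ts
end

-- Capture-free simultaneous substitution of the terms `Ts` for the names `as`.
mutual
  def substT {F : Type} (as : List ℕ) (Ts : List (Term F)) : Term F → Term F
    | .name a =>
        if a ∈ as then Ts.getD (as.idxOf a) (.name a) else .name a
    | .app f ts => .app f (substL as Ts ts)
  def substL {F : Type} (as : List ℕ) (Ts : List (Term F)) :
      List (Term F) → List (Term F)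
    | [] => []
    | t :: ts => substT as Ts t :: substL as Ts ts
end

-- Renaming of the names of a term by a function σ : ℕ → ℕ.
mutual
  def renameT {F : Type} (σ : ℕ → ℕ) : Term F → Term F
    | .name a => .name (σ a)
    | .app f ts => .app f (renameL σ ts)
  def renameL {F : Type} (σ : ℕ → ℕ) : List (Term F) → List (Term F)
    | [] => []
    | t :: ts => renameT σ t :: renameL σ ts
end

/-- The permutation `(bs as)`: the composition of the transpositions
`(bᵢ aᵢ)` for corresponding entries of the two lists. -/
def swapPerm (bs as : List ℕ) : Equiv.Perm ℕ :=
  ((bs.zip as).map fun p => Equiv.swap p.1 p.2).prod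

end Term

/-!
Both sides of the law are obtained by replacing each name of `X` independently, so it suffices
to compare them on a single name `a`. If `a = aᵢ`, the permutation `(b⃗ a⃗)` sends it to `bᵢ`
(the other transpositions move neither `aᵢ` nor `bᵢ`), and both sides give `Tᵢ`; otherwise `a` is
fixed by the permutation and untouched by both substitutions.
-/

namespace Term

theorem swapPerm_cons (b a : ℕ) (bs as : List ℕ) :
    swapPerm (b :: bs) (a :: as) = Equiv.swap b a * swapPerm bs as := rfl

theorem swapPerm_apply_of_notMem {bs as : List ℕ} {x : ℕ} (hxa : x ∉ as) (hxb : x ∉ bs) :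
    swapPerm bs as x = x := by
  induction bs generalizing as with
  | nil => rfl
  | cons b bs ih =>
    cases as with
    | nil => rfl
    | cons a as =>
      simp only [List.mem_cons, not_or] at hxa hxb
      rw [swapPerm_cons, Equiv.Perm.mul_apply, ih hxa.2 hxb.2,
        Equiv.swap_apply_of_ne_of_ne hxb.1 hxa.1]

theorem swapPerm_apply_getElem {bs as : List ℕ} (has : as.Nodup) (hbs : bs.Nodup)
    (hlen : bs.length = as.length) (hdisj : ∀ b ∈ bs, b ∉ as) (i : ℕ) (hi : i < as.length) :
    swapPerm bs as as[i] = bs[i] := by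
  induction bs generalizing as i with
  | nil => simp at hlen; omega
  | cons b bs ih =>
    cases as with
    | nil => simp at hi
    | cons a as =>
      rw [swapPerm_cons, Equiv.Perm.mul_apply]
      cases i with
      | zero =>
        have hab : a ∉ bs := fun h => hdisj a (by simp [h]) (by simp)
        simp [swapPerm_apply_of_notMem (List.nodup_cons.1 has).1 hab]
      | succ i =>
        have hi' : i < bs.length := by simp at hlen hi; omega
        simp only [List.getElem_cons_succ]
        rw [ih has.of_cons hbs.of_cons (by simpa using hlen)
          (fun x hx hxas => hdisj x (List.mem_cons_of_mem _ hx) (List.mem_cons_of_mem _ hxas)) i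
          (by simpa using hi)]
        refine Equiv.swap_apply_of_ne_of_ne ?_ ?_
        · exact fun h => (List.nodup_cons.1 hbs).1 (h ▸ List.getElem_mem hi')
        · exact fun h => hdisj a (h ▸ List.mem_cons_of_mem _ (List.getElem_mem hi'))
            List.mem_cons_self

variable {F : Type}

mutual
theorem substT_eq_substT_renameT {as bs : List ℕ} {Ts Us : List (Term F)} {σ : ℕ → ℕ} :
    ∀ X : Term F, (∀ a ∈ namesT X, substT as Ts (.name a) = substT bs Us (.name (σ a))) →
      substT as Ts X = substT bs Us (renameT σ X)
  | .name a, h => h a (by simp [namesT])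
  | .app f ts, h => by
      simp only [substT, renameT]
      exact congrArg _ (substL_eq_substL_renameL ts fun a ha => h a (by simpa [namesT]))

theorem substL_eq_substL_renameL {as bs : List ℕ} {Ts Us : List (Term F)} {σ : ℕ → ℕ} :
    ∀ ts : List (Term F), (∀ a ∈ namesL ts, substT as Ts (.name a) = substT bs Us (.name (σ a))) →
      substL as Ts ts = substL bs Us (renameL σ ts)
  | [], _ => rfl
  | t :: ts, h => by
      simp only [substL, renameL]
      rw [substT_eq_substT_renameT t fun a ha => h a (by simp [namesL, ha]),
        substL_eq_substL_renameL ts fun a ha => h a (by simp [namesL, ha])]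
end

theorem substT_name_eq_substT_swapPerm {as bs : List ℕ} {Ts : List (Term F)} (has : as.Nodup)
    (hbs : bs.Nodup) (hlen : bs.length = as.length) (hlenT : Ts.length = as.length)
    (hdisj : ∀ b ∈ bs, b ∉ as) {a : ℕ} (hab : a ∉ bs) :
    substT as Ts (.name a) = substT bs Ts (.name (swapPerm bs as a)) := by
  by_cases haas : a ∈ as
  · set i := as.idxOf a
    have hi : i < as.length := List.idxOf_lt_length_iff.2 haas
    have hswap : swapPerm bs as a = bs[i] := by
      conv_lhs => rw [← List.getElem_idxOf hi]
      exact swapPerm_apply_getElem has hbs hlen hdisj i hi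
    have hidx : bs.idxOf bs[i] = i := hbs.idxOf_getElem i _
    simp only [substT, haas, hswap, List.getElem_mem, hidx, if_true]
    rw [List.getD_eq_getElem _ _ (by omega), List.getD_eq_getElem _ _ (by omega)]
  · simp [substT, swapPerm_apply_of_notMem haas hab, haas, hab]

end Term

open Term in
/-- alpha-renaming law for substitution.  If the names `bs`
occur neither in `X` nor in `as`, then
`X[as := Ts] = ((bs as) · X)[bs := Ts]`. -/
theorem subst_alpha {F : Type} (X : Term F) (as bs : List ℕ)
    (Ts : List (Term F))
    (hnodup : as.Nodup) (hnodup' : bs.Nodup)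
    (hlen : bs.length = as.length) (hlenT : Ts.length = as.length)
    (hfresh : ∀ b ∈ bs, b ∉ namesT X)
    (hdisj : ∀ b ∈ bs, b ∉ as) :
    substT as Ts X = substT bs Ts (renameT (fun a => swapPerm bs as a) X) :=
  substT_eq_substT_renameT X fun _ ha =>
    substT_name_eq_substT_swapPerm hnodup hnodup' hlen hlenT hdisj fun hb => hfresh _ hb ha
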